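/- Let r ∈ int(D_d) be reduced. Then r ∈ D_d^{(0)} (i.e., for every z ∈ ℤ^d there is n with τ_r^n(z) = 0) if and only if 0 ∈ T_r(0) and 0 ∉ T_r(y) for all y ∈ ℤ^d, y ≠ 0. -/

import Mathlib

/-!
Write `τ` for `srsTau r` and `M` for `companion r`. Since `τ z = M z + (0, …, 0, {r·z})` and `M` is
contractive, the error `τ^n z - M^n z` is bounded uniformly in `n` and `z`. Hence every orbit
eventually stays in a finite set of lattice points and so runs into a cycle. The same bound shows
that `0 ∈ T_r(y)` iff `y` is purely periodic: a periodic `y` is reached from its own bounded orbit;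
conversely, as `M` is invertible (`r_0 ≠ 0`), `M^n z_n → 0` forces `M^(n-k) z_n → 0` for each fixed
`k`, so a long final stretch of the chain `z_n ↦ … ↦ y` lies in a finite set and contains a cycle.
Under the finiteness property the only periodic point is the fixed point `0`; conversely every orbit
reaches a periodic point, which must then be `0`.
-/

open Matrix Filter

noncomputable section

/-- Scalar product r·z of a real vector with an integer vector. -/
def srsDot {d : ℕ} (r : Fin d → ℝ) (z : Fin d → ℤ) : ℝ := ∑ i, r i * (z i : ℝ)

/-- The shift radix map τ_r(z) = (z_1,...,z_{d-1}, -⌊r·z⌋). -/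
def srsTau {d : ℕ} (r : Fin d → ℝ) (z : Fin d → ℤ) : Fin d → ℤ :=
  fun i => if h : (i : ℕ) + 1 < d then z ⟨(i : ℕ) + 1, h⟩ else -⌊srsDot r z⌋

/-- The companion matrix M_r of r. -/
def companion {d : ℕ} (r : Fin d → ℝ) : Matrix (Fin d) (Fin d) ℝ :=
  fun i j => if (i : ℕ) + 1 < d then (if (j : ℕ) = (i : ℕ) + 1 then 1 else 0) else -r j

/-- The vector (0,...,0,v)^t. -/
def digitVec {d : ℕ} (v : ℝ) : Fin d → ℝ := fun i => if (i : ℕ) + 1 = d then v else 0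

/-- Coordinatewise cast of an integer vector to a real vector. -/
def intToReal {d : ℕ} (z : Fin d → ℤ) : Fin d → ℝ := fun i => (z i : ℝ)

/-- M_r is contractive (spectral radius < 1). -/
def srsContractive {d : ℕ} (r : Fin d → ℝ) : Prop :=
  ∃ C > (0:ℝ), ∃ ρ : ℝ, 0 ≤ ρ ∧ ρ < 1 ∧
    ∀ (n : ℕ) (x : Fin d → ℝ), ‖((companion r) ^ n).mulVec x‖ ≤ C * ρ ^ n * ‖x‖

/-- The SRS tile T_r(x), as the set of limit points lim M_r^n z_{-n} with
τ_r^n(z_{-n}) = x. -/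
def srsTile {d : ℕ} (r : Fin d → ℝ) (x : Fin d → ℤ) : Set (Fin d → ℝ) :=
  {t | ∃ z : ℕ → (Fin d → ℤ), (∀ n, (srsTau r)^[n] (z n) = x) ∧
    Tendsto (fun n => ((companion r) ^ n).mulVec (intToReal (z n))) atTop (nhds t)}

open Function

lemma Set.Finite.exists_iterate_mem_periodicPts {α : Type*} {s : Set α} (hs : s.Finite)
    (f : α → α) : ∃ K, ∀ w, (∀ j ≤ K, f^[j] w ∈ s) → f^[K] w ∈ periodicPts f := by
  refine ⟨hs.toFinset.card, fun w hw => ?_⟩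
  set K := hs.toFinset.card
  have of_eq : ∀ i j, i < j → j ≤ K → f^[i] w = f^[j] w → f^[K] w ∈ periodicPts f := by
    intro i j hij hjK heq
    have hper : IsPeriodicPt f (j - i) (f^[i] w) := by
      rw [IsPeriodicPt, IsFixedPt, ← iterate_add_apply, Nat.sub_add_cancel hij.le, heq]
    have := hper.apply_iterate (K - i)
    rw [← iterate_add_apply, Nat.sub_add_cancel (hij.le.trans hjK)] at this
    exact mk_mem_periodicPts (Nat.sub_pos_of_lt hij) this
  obtain ⟨i, hi, j, hj, hij, heq⟩ := Finset.exists_ne_map_eq_of_card_lt_of_maps_to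
    (s := Finset.range (K + 1)) (t := hs.toFinset) (by simp [K])
    (fun j hj => hs.mem_toFinset.2 (hw j (Nat.lt_succ_iff.1 (Finset.mem_range.1 hj))))
  rw [Finset.mem_range, Nat.lt_succ_iff] at hi hj
  rcases Nat.lt_or_gt_of_ne hij with h | h
  · exact of_eq i j h hj heq
  · exact of_eq j i h hi heq.symm

lemma Matrix.tendsto_pow_sub_mulVec {ι 𝕜 : Type*} [Fintype ι] [DecidableEq ι] [Field 𝕜]
    [TopologicalSpace 𝕜] [IsTopologicalRing 𝕜] {M : Matrix ι ι 𝕜} (hM : IsUnit M)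
    {x : ℕ → ι → 𝕜} (hx : Tendsto (fun n => (M ^ n) *ᵥ x n) atTop (nhds 0)) (k : ℕ) :
    Tendsto (fun n => (M ^ (n - k)) *ᵥ x n) atTop (nhds 0) := by
  have hdet : IsUnit (M ^ k).det := (isUnit_iff_isUnit_det _).1 (hM.pow k)
  have hcont : Tendsto (fun v => (M ^ k)⁻¹ *ᵥ v) (nhds 0) (nhds 0) := by
    simpa using (continuous_const.matrix_mulVec continuous_id).tendsto (0 : ι → 𝕜)
  refine (hcont.comp hx).congr' ?_
  filter_upwards [eventually_ge_atTop k] with n hn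
  obtain ⟨j, rfl⟩ := Nat.exists_eq_add_of_le hn
  rw [Function.comp_apply, mulVec_mulVec, pow_add, nonsing_inv_mul_cancel_left _ _ hdet,
    Nat.add_sub_cancel_left]

section SRS

variable {d : ℕ}

lemma srsTau_zero (r : Fin d → ℝ) : srsTau r 0 = 0 := by
  funext i
  simp [srsTau, srsDot]

lemma norm_intToReal (z : Fin d → ℤ) : ‖intToReal z‖ = ‖z‖ := rfl

lemma finite_setOf_norm_intToReal_le (R : ℝ) :
    {w : Fin d → ℤ | ‖intToReal w‖ ≤ R}.Finite := by
  simpa only [norm_intToReal, ← mem_closedBall_zero_iff, Set.ofPred_mem_eq] using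
    (isCompact_closedBall (0 : Fin d → ℤ) R).finite_of_discrete

lemma companion_mulVec_apply (r x : Fin d → ℝ) (i : Fin d) :
    (companion r *ᵥ x) i = if h : (i : ℕ) + 1 < d then x ⟨i + 1, h⟩ else -∑ j, r j * x j := by
  split_ifs with h
  · simp only [mulVec, dotProduct, companion, if_pos h, ite_mul, one_mul, zero_mul]
    rw [Fintype.sum_eq_single ⟨i + 1, h⟩ fun j hj => if_neg fun h' => hj (Fin.ext h'), if_pos rfl]
  · simp [mulVec, dotProduct, companion, h]

lemma intToReal_srsTau (r : Fin d → ℝ) (z : Fin d → ℤ) :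
    intToReal (srsTau r z) =
      companion r *ᵥ intToReal z + digitVec (Int.fract (srsDot r z)) := by
  funext i
  rw [Pi.add_apply, companion_mulVec_apply]
  by_cases h : (i : ℕ) + 1 < d
  · simp [intToReal, srsTau, digitVec, h, h.ne]
  · simp only [intToReal, srsTau, digitVec, srsDot, dif_neg h, if_pos (by omega : (i : ℕ) + 1 = d)]
    push_cast
    rw [Int.fract]
    ring

lemma norm_digitVec_le (v : ℝ) : ‖(digitVec v : Fin d → ℝ)‖ ≤ ‖v‖ := by
  refine (pi_norm_le_iff_of_nonneg (norm_nonneg v)).2 fun i => ?_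
  simp only [digitVec]
  split_ifs <;> simp

lemma isUnit_companion (hd : 0 < d) (r : Fin d → ℝ) (hr0 : r ⟨0, hd⟩ ≠ 0) :
    IsUnit (companion r) := by
  obtain ⟨m, rfl⟩ := Nat.exists_eq_add_one_of_ne_zero hd.ne'
  rw [← mulVec_injective_iff_isUnit]
  suffices hker : ∀ x, companion r *ᵥ x = 0 → x = 0 from
    fun x y h => sub_eq_zero.1 (hker _ (by rw [mulVec_sub, h, sub_self]))
  intro x hx
  have hsucc : ∀ j : Fin m, x j.succ = 0 := fun j => by
    have := congrFun hx j.castSucc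
    simp only [companion_mulVec_apply, Fin.val_castSucc, Nat.add_lt_add_iff_right, j.isLt,
      dif_pos, Pi.zero_apply] at this
    exact this
  have hzero : x 0 = 0 := by
    have := congrFun hx (Fin.last m)
    simp [companion_mulVec_apply, Fin.sum_univ_succ, hsucc] at this
    exact this.resolve_left hr0
  ext j
  cases j using Fin.cases <;> simp [hzero, hsucc]

lemma norm_intToReal_iterate_sub_le (r : Fin d → ℝ) {C ρ : ℝ} (hC : 0 ≤ C) (hρ : 0 ≤ ρ)
    (hb : ∀ (n : ℕ) (x : Fin d → ℝ), ‖(companion r ^ n) *ᵥ x‖ ≤ C * ρ ^ n * ‖x‖)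
    (n : ℕ) (z : Fin d → ℤ) :
    ‖intToReal ((srsTau r)^[n] z) - (companion r ^ n) *ᵥ intToReal z‖ ≤
      C * ∑ j ∈ Finset.range n, ρ ^ j := by
  induction n generalizing z with
  | zero => simp
  | succ n ih =>
    have hsplit : intToReal ((srsTau r)^[n + 1] z) - (companion r ^ (n + 1)) *ᵥ intToReal z =
        (intToReal ((srsTau r)^[n] (srsTau r z)) - (companion r ^ n) *ᵥ intToReal (srsTau r z))
          + (companion r ^ n) *ᵥ digitVec (Int.fract (srsDot r z)) := by
      rw [iterate_succ_apply, intToReal_srsTau r z, mulVec_add, pow_succ, ← mulVec_mulVec]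
      abel
    have hdigit : ‖(digitVec (Int.fract (srsDot r z)) : Fin d → ℝ)‖ ≤ 1 :=
      (norm_digitVec_le _).trans <| by
        rw [Real.norm_of_nonneg (Int.fract_nonneg _)]; exact (Int.fract_lt_one _).le
    calc _ ≤ C * ∑ j ∈ Finset.range n, ρ ^ j + C * ρ ^ n * 1 := by
          rw [hsplit]
          refine (norm_add_le _ _).trans (add_le_add (ih _) ((hb _ _).trans ?_))
          gcongr
      _ = C * ∑ j ∈ Finset.range (n + 1), ρ ^ j := by rw [Finset.sum_range_succ]; ring

namespace srsContractive

variable {r : Fin d → ℝ}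

lemma exists_norm_iterate_le (hcontr : srsContractive r) :
    ∃ B, ∀ (n : ℕ) (z : Fin d → ℤ),
      ‖intToReal ((srsTau r)^[n] z)‖ ≤ ‖(companion r ^ n) *ᵥ intToReal z‖ + B := by
  obtain ⟨C, hC, ρ, hρ0, hρ1, hb⟩ := hcontr
  refine ⟨C * (1 - ρ)⁻¹, fun n z => (norm_le_norm_add_norm_sub' _ _).trans
    (add_le_add le_rfl ((norm_intToReal_iterate_sub_le r hC.le hρ0 hb n z).trans ?_))⟩
  gcongr
  have := geom_sum_Ico_le_of_lt_one (m := 0) (n := n) hρ0 hρ1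
  rwa [← Finset.range_eq_Ico, pow_zero, one_div] at this

lemma tendsto_mulVec_zero (hcontr : srsContractive r) {x : ℕ → Fin d → ℝ} {R : ℝ}
    (hx : ∀ n, ‖x n‖ ≤ R) : Tendsto (fun n => (companion r ^ n) *ᵥ x n) atTop (nhds 0) := by
  obtain ⟨C, hC, ρ, hρ0, hρ1, hb⟩ := hcontr
  refine squeeze_zero_norm (fun n => (hb n _).trans ?_) (a := fun n => C * ρ ^ n * R) ?_
  · gcongr
    exact hx n
  · simpa using ((tendsto_pow_atTop_nhds_zero_of_lt_one hρ0 hρ1).const_mul C).mul_const R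

lemma exists_iterate_mem_periodicPts (hcontr : srsContractive r) (z : Fin d → ℤ) :
    ∃ N, (srsTau r)^[N] z ∈ periodicPts (srsTau r) := by
  obtain ⟨B, hB⟩ := hcontr.exists_norm_iterate_le
  obtain ⟨K, hK⟩ := (finite_setOf_norm_intToReal_le (d := d) (1 + B)).exists_iterate_mem_periodicPts
    (srsTau r)
  obtain ⟨N, hN⟩ := eventually_atTop.1 <|
    (hcontr.tendsto_mulVec_zero (x := fun _ => intToReal z) fun _ => le_rfl).eventually
      (Metric.closedBall_mem_nhds 0 one_pos)
  refine ⟨K + N, ?_⟩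
  rw [iterate_add_apply]
  refine hK _ fun j _ => ?_
  rw [← iterate_add_apply]
  exact (hB _ _).trans (add_le_add_left (mem_closedBall_zero_iff.1 (hN _ (by omega))) _)

lemma zero_mem_srsTile_of_mem_periodicPts (hcontr : srsContractive r) {y : Fin d → ℤ}
    (hy : y ∈ periodicPts (srsTau r)) : (0 : Fin d → ℝ) ∈ srsTile r y := by
  obtain ⟨p, hp, hper⟩ := hy
  obtain ⟨q, rfl⟩ := Nat.exists_eq_add_one_of_ne_zero hp.ne'
  obtain ⟨R, hR⟩ :=
    (Set.finite_range fun k : Fin (q + 1) => ‖intToReal ((srsTau r)^[k] y)‖).bddAbove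
  refine ⟨fun n => (srsTau r)^[q * n] y, fun n => ?_,
    hcontr.tendsto_mulVec_zero (R := R) fun n => ?_⟩
  · show (srsTau r)^[n] ((srsTau r)^[q * n] y) = y
    rw [← iterate_add_apply, show n + q * n = (q + 1) * n by ring]
    exact (hper.mul_const n).eq
  · show ‖intToReal ((srsTau r)^[q * n] y)‖ ≤ R
    rw [← hper.iterate_mod_apply]
    exact hR ⟨⟨_, Nat.mod_lt _ hp⟩, rfl⟩

lemma mem_periodicPts_of_zero_mem_srsTile (hd : 0 < d) (hr0 : r ⟨0, hd⟩ ≠ 0)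
    (hcontr : srsContractive r) {y : Fin d → ℤ} (hy : (0 : Fin d → ℝ) ∈ srsTile r y) :
    y ∈ periodicPts (srsTau r) := by
  obtain ⟨z, hz, hlim⟩ := hy
  obtain ⟨B, hB⟩ := hcontr.exists_norm_iterate_le
  obtain ⟨K, hK⟩ := (finite_setOf_norm_intToReal_le (d := d) (1 + B)).exists_iterate_mem_periodicPts
    (srsTau r)
  have hsmall : ∀ᶠ n in atTop, ∀ k ∈ Set.Iic K,
      (companion r ^ (n - k)) *ᵥ intToReal (z n) ∈ Metric.closedBall 0 1 :=
    (eventually_all_finite (Set.finite_Iic K)).2 fun k _ =>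
      (Matrix.tendsto_pow_sub_mulVec (isUnit_companion hd r hr0) hlim k).eventually
        (Metric.closedBall_mem_nhds 0 one_pos)
  obtain ⟨n, hn, hKn⟩ := (hsmall.and (eventually_ge_atTop K)).exists
  have hchain : ∀ j ≤ K, (srsTau r)^[j] ((srsTau r)^[n - K] (z n)) ∈
      {w | ‖intToReal w‖ ≤ 1 + B} := by
    intro j hj
    rw [Set.mem_ofPred_eq, ← iterate_add_apply, show j + (n - K) = n - (K - j) by omega]
    exact (hB _ _).trans (add_le_add_left (mem_closedBall_zero_iff.1 (hn _ (Nat.sub_le K j))) _)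
  simpa only [← iterate_add_apply, Nat.add_sub_cancel' hKn, hz] using hK _ hchain

lemma zero_mem_srsTile_iff (hd : 0 < d) (hr0 : r ⟨0, hd⟩ ≠ 0) (hcontr : srsContractive r)
    {y : Fin d → ℤ} : (0 : Fin d → ℝ) ∈ srsTile r y ↔ y ∈ periodicPts (srsTau r) :=
  ⟨hcontr.mem_periodicPts_of_zero_mem_srsTile hd hr0, hcontr.zero_mem_srsTile_of_mem_periodicPts⟩

end srsContractive

end SRS

/-- r has the finiteness property iff 0 lies in the central tile
and in no other tile. -/
theorem finiteness_iff_zero_exclusive (d : ℕ) (hd : 0 < d) (r : Fin d → ℝ)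
    (hr0 : r ⟨0, hd⟩ ≠ 0) (hcontr : srsContractive r) :
    (∀ z : Fin d → ℤ, ∃ n : ℕ, (srsTau r)^[n] z = 0) ↔
      ((0 : Fin d → ℝ) ∈ srsTile r 0 ∧
        ∀ y : Fin d → ℤ, y ≠ 0 → (0 : Fin d → ℝ) ∉ srsTile r y) := by
  simp only [srsContractive.zero_mem_srsTile_iff hd hr0 hcontr]
  have hfix : IsFixedPt (srsTau r) 0 := srsTau_zero r
  constructor
  · refine fun hfin => ⟨mk_mem_periodicPts one_pos (hfix.isPeriodicPt 1), fun y hy hper => hy ?_⟩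
    obtain ⟨n, hn⟩ := hfin y
    -- a periodic point whose orbit meets a fixed point is that fixed point
    have hyfix : IsPeriodicPt (srsTau r) 1 y :=
      isPeriodicPt_of_mem_periodicPts_of_isPeriodicPt_iterate hper (hn ▸ hfix.isPeriodicPt 1)
    exact (hyfix.trans_dvd (one_dvd n)).eq.symm.trans hn
  · rintro ⟨-, hexc⟩ z
    obtain ⟨N, hN⟩ := hcontr.exists_iterate_mem_periodicPts z
    exact ⟨N, not_not.1 fun h => hexc _ h hN⟩
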